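/- Let G be an infinite connected simple graph with finite vertex degrees, with a distinguished root vertex o, and let 0 < q < i(G), where i(G) is the anchored expansion constant of G. Then every q-island of G has only finitely many vertices, and every q-island of G is itself a q-isolated core of G. -/

import Mathlib

open SimpleGraph

variable {V : Type*}

/-- The edge boundary `∂S` of a vertex set `S`: the set of edges of `G` with one endpoint
in `S` and the other endpoint outside `S`. -/
def edgeBdry (G : SimpleGraph V) (S : Set V) : Set (Sym2 V) :=
  {e | e ∈ G.edgeSet ∧ ∃ x ∈ S, ∃ y ∉ S, e = s(x, y)}

/-- The `q`-isolation `Δ_q S := q·|S| − |∂S|` of a vertex set `S`. -/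
noncomputable def isolation (G : SimpleGraph V) (q : ℝ) (S : Set V) : ℝ :=
  q * (S.ncard : ℝ) - ((edgeBdry G S).ncard : ℝ)

/-- A finite vertex set `S` is a `q`-isolated core if `Δ_q S > Δ_q A` for every
proper subset `A ⊊ S`. -/
def IsIsolatedCore (G : SimpleGraph V) (q : ℝ) (S : Set V) : Prop :=
  S.Finite ∧ ∀ A : Set V, A ⊂ S → isolation G q A < isolation G q S

/-- `A_q`: the union of all `q`-isolated cores of `G`. -/
def coreUnion (G : SimpleGraph V) (q : ℝ) : Set V :=
  ⋃₀ {S : Set V | IsIsolatedCore G q S}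

/-- A `q`-island: a connected component of (the subgraph of `G` induced by) `A_q`,
characterised as a nonempty connected subset of `A_q` which is closed under
adjacency within `A_q`. -/
def IsIsland (G : SimpleGraph V) (q : ℝ) (C : Set V) : Prop :=
  C ⊆ coreUnion G q ∧ (G.induce C).Connected ∧
    ∀ x ∈ C, ∀ y ∈ coreUnion G q, G.Adj x y → y ∈ C

/-- The anchored expansion constant
`i(G) = lim_{n→∞} inf { |∂K|/|K| : o ∈ K ⊆ G connected, n ≤ |K| < ∞ }`;
since the infima are nondecreasing in `n`, the limit equals the supremum over `n`. -/
noncomputable def anchoredExpansion (G : SimpleGraph V) (o : V) : ℝ :=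
  ⨆ n : ℕ, sInf {r : ℝ | ∃ K : Set V, o ∈ K ∧ K.Finite ∧ (G.induce K).Connected ∧
    n ≤ K.ncard ∧ r = ((edgeBdry G K).ncard : ℝ) / (K.ncard : ℝ)}

/-- The set of children of a vertex `x` in the tree rooted at `o`: the neighbours of `x`
at larger graph distance from the root. -/
def children (G : SimpleGraph V) (o x : V) : Set V :=
  {y | G.Adj x y ∧ G.dist o y = G.dist o x + 1}

/-!
The edge boundary is submodular, so `q`-isolation is supermodular; hence the union of two
`q`-isolated cores is a core, and a core splits into cores along any partition with no edges
between the parts. Every vertex of an island therefore lies in a core inside the island, and a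
finite island, being a finite union of such cores, is itself a core.

If an island `C` were infinite, it would contain connected cores `W` through a fixed vertex `c`
of every size. Joining `W` to the root by a fixed path `P` to `c` gives a connected set `K ∋ o`
with `|∂K| ≤ |∂W| + |∂P| < q|W| + |∂P|`, while `q < i(G)` forces `|∂K| ≥ r|K|` for some `r > q`
once `K` is large; these are incompatible for `|W| > |∂P| / (r - q)`.
-/

section EdgeBoundary

variable {G : SimpleGraph V} {S T X Y : Set V}

lemma edgeBdry_finite (hloc : ∀ v : V, (G.neighborSet v).Finite) (hS : S.Finite) :
    (edgeBdry G S).Finite := by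
  refine (hS.biUnion fun x _ => (hloc x).image fun y => s(x, y)).subset ?_
  rintro e ⟨he, x, hx, y, -, rfl⟩
  exact Set.mem_biUnion hx ⟨y, he, rfl⟩

@[simp]
lemma edgeBdry_empty : edgeBdry G ∅ = ∅ := by
  simp [edgeBdry]

lemma edgeBdry_union_subset : edgeBdry G (S ∪ T) ⊆ edgeBdry G S ∪ edgeBdry G T := by
  rintro e ⟨he, x, hx | hx, y, hy, rfl⟩
  · exact Or.inl ⟨he, x, hx, y, fun h => hy (Or.inl h), rfl⟩
  · exact Or.inr ⟨he, x, hx, y, fun h => hy (Or.inr h), rfl⟩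

lemma edgeBdry_inter_subset : edgeBdry G (S ∩ T) ⊆ edgeBdry G S ∪ edgeBdry G T := by
  rintro e ⟨he, x, hx, y, hy, rfl⟩
  by_cases hyS : y ∈ S
  · exact Or.inr ⟨he, x, hx.2, y, fun hyT => hy ⟨hyS, hyT⟩, rfl⟩
  · exact Or.inl ⟨he, x, hx.1, y, hyS, rfl⟩

lemma edgeBdry_union_inter_edgeBdry_inter_subset :
    edgeBdry G (S ∪ T) ∩ edgeBdry G (S ∩ T) ⊆ edgeBdry G S ∩ edgeBdry G T := by
  rintro e ⟨⟨he, x, -, y, hy, rfl⟩, ⟨-, a, ha, b, -, hab⟩⟩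
  rcases Sym2.eq_iff.mp hab with ⟨rfl, rfl⟩ | ⟨rfl, rfl⟩
  · exact ⟨⟨he, x, ha.1, y, fun h => hy (Or.inl h), rfl⟩,
      ⟨he, x, ha.2, y, fun h => hy (Or.inr h), rfl⟩⟩
  · exact absurd (Or.inl ha.1) hy

lemma ncard_edgeBdry_union_add_ncard_edgeBdry_inter_le
    (hloc : ∀ v : V, (G.neighborSet v).Finite) (hS : S.Finite) (hT : T.Finite) :
    (edgeBdry G (S ∪ T)).ncard + (edgeBdry G (S ∩ T)).ncard ≤
      (edgeBdry G S).ncard + (edgeBdry G T).ncard := by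
  have hST : (edgeBdry G S ∪ edgeBdry G T).Finite :=
    (edgeBdry_finite hloc hS).union (edgeBdry_finite hloc hT)
  calc (edgeBdry G (S ∪ T)).ncard + (edgeBdry G (S ∩ T)).ncard
      = (edgeBdry G (S ∪ T) ∪ edgeBdry G (S ∩ T)).ncard +
          (edgeBdry G (S ∪ T) ∩ edgeBdry G (S ∩ T)).ncard :=
        (Set.ncard_union_add_ncard_inter _ _ (hST.subset edgeBdry_union_subset)
          (hST.subset edgeBdry_inter_subset)).symm
    _ ≤ (edgeBdry G S ∪ edgeBdry G T).ncard + (edgeBdry G S ∩ edgeBdry G T).ncard :=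
        add_le_add (Set.ncard_le_ncard (Set.union_subset edgeBdry_union_subset
          edgeBdry_inter_subset) hST) (Set.ncard_le_ncard edgeBdry_union_inter_edgeBdry_inter_subset
          (hST.subset (Set.inter_subset_left.trans Set.subset_union_left)))
    _ = (edgeBdry G S).ncard + (edgeBdry G T).ncard :=
        Set.ncard_union_add_ncard_inter _ _ (edgeBdry_finite hloc hS) (edgeBdry_finite hloc hT)

lemma edgeBdry_union_of_not_adj (hXY : ∀ x ∈ X, ∀ y ∈ Y, ¬ G.Adj x y) :
    edgeBdry G (X ∪ Y) = edgeBdry G X ∪ edgeBdry G Y := by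
  refine edgeBdry_union_subset.antisymm ?_
  rintro e (⟨he, x, hx, y, hy, rfl⟩ | ⟨he, x, hx, y, hy, rfl⟩)
  · exact ⟨he, x, Or.inl hx, y, fun h => h.elim hy fun hyY => hXY x hx y hyY he, rfl⟩
  · exact ⟨he, x, Or.inr hx, y, fun h => h.elim (fun hyX => hXY y hyX x hx he.symm) hy, rfl⟩

lemma disjoint_edgeBdry_of_not_adj (hdisj : Disjoint X Y)
    (hXY : ∀ x ∈ X, ∀ y ∈ Y, ¬ G.Adj x y) :
    Disjoint (edgeBdry G X) (edgeBdry G Y) := by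
  rw [Set.disjoint_left]
  rintro e ⟨he, x, hx, y, -, rfl⟩ ⟨-, a, ha, b, -, hab⟩
  rcases Sym2.eq_iff.mp hab with ⟨rfl, -⟩ | ⟨-, rfl⟩
  · exact Set.disjoint_left.mp hdisj hx ha
  · exact hXY x hx y ha he

end EdgeBoundary

section Isolation

variable {G : SimpleGraph V} {q : ℝ} {A B S T X Y : Set V}

@[simp]
lemma isolation_empty : isolation G q ∅ = 0 := by
  simp [isolation]

lemma isolation_add_isolation_le (hloc : ∀ v : V, (G.neighborSet v).Finite)
    (hS : S.Finite) (hT : T.Finite) :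
    isolation G q S + isolation G q T ≤ isolation G q (S ∪ T) + isolation G q (S ∩ T) := by
  have hcard : ((S ∪ T).ncard : ℝ) + (S ∩ T).ncard = S.ncard + T.ncard := by
    exact_mod_cast Set.ncard_union_add_ncard_inter S T hS hT
  have hbdry : ((edgeBdry G (S ∪ T)).ncard : ℝ) + (edgeBdry G (S ∩ T)).ncard ≤
      (edgeBdry G S).ncard + (edgeBdry G T).ncard := by
    exact_mod_cast ncard_edgeBdry_union_add_ncard_edgeBdry_inter_le hloc hS hT
  simp only [isolation]
  linear_combination (-q) * hcard + hbdry

lemma isolation_union_of_not_adj (hloc : ∀ v : V, (G.neighborSet v).Finite)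
    (hX : X.Finite) (hY : Y.Finite) (hdisj : Disjoint X Y)
    (hXY : ∀ x ∈ X, ∀ y ∈ Y, ¬ G.Adj x y) :
    isolation G q (X ∪ Y) = isolation G q X + isolation G q Y := by
  simp only [isolation]
  rw [edgeBdry_union_of_not_adj hXY, Set.ncard_union_eq (disjoint_edgeBdry_of_not_adj hdisj hXY)
    (edgeBdry_finite hloc hX) (edgeBdry_finite hloc hY), Set.ncard_union_eq hdisj hX hY]
  push_cast
  ring

lemma isIsolatedCore_empty : IsIsolatedCore G q ∅ :=
  ⟨Set.finite_empty, fun _ hA => absurd (Set.subset_empty_iff.mp hA.subset) hA.ne⟩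

lemma IsIsolatedCore.isolation_pos (hS : IsIsolatedCore G q S) (hne : S.Nonempty) :
    0 < isolation G q S := by
  simpa using hS.2 ∅ hne.empty_ssubset

lemma IsIsolatedCore.isolation_le (hS : IsIsolatedCore G q S) (hA : A ⊆ S) :
    isolation G q A ≤ isolation G q S := by
  rcases hA.eq_or_ssubset with rfl | hA
  · rfl
  · exact (hS.2 A hA).le

lemma IsIsolatedCore.isolation_le_union (hloc : ∀ v : V, (G.neighborSet v).Finite)
    (hT : IsIsolatedCore G q T) (hB : B.Finite) :
    isolation G q B ≤ isolation G q (B ∪ T) := by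
  linarith [isolation_add_isolation_le (q := q) hloc hB hT.1,
    hT.isolation_le (Set.inter_subset_right (s := B))]

lemma IsIsolatedCore.isolation_lt_union (hloc : ∀ v : V, (G.neighborSet v).Finite)
    (hT : IsIsolatedCore G q T) (hB : B.Finite) (hTB : ¬ T ⊆ B) :
    isolation G q B < isolation G q (B ∪ T) := by
  have hlt : isolation G q (B ∩ T) < isolation G q T :=
    hT.2 _ (Set.inter_subset_right.ssubset_of_ne fun h => hTB (h ▸ Set.inter_subset_left))
  linarith [isolation_add_isolation_le (q := q) hloc hB hT.1]

lemma IsIsolatedCore.union (hloc : ∀ v : V, (G.neighborSet v).Finite)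
    (hS : IsIsolatedCore G q S) (hT : IsIsolatedCore G q T) :
    IsIsolatedCore G q (S ∪ T) := by
  refine ⟨hS.1.union hT.1, fun A hA => ?_⟩
  have hAf : A.Finite := (hS.1.union hT.1).subset hA.subset
  by_cases hSA : S ⊆ A
  · have hTA : ¬ T ⊆ A := fun hTA => hA.not_subset (Set.union_subset hSA hTA)
    calc isolation G q A < isolation G q (A ∪ T) := hT.isolation_lt_union hloc hAf hTA
      _ = isolation G q (S ∪ T) := by
        rw [(Set.union_subset hA.subset Set.subset_union_right).antisymm
          (Set.union_subset_union_left T hSA)]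
  · calc isolation G q A < isolation G q (A ∪ S) := hS.isolation_lt_union hloc hAf hSA
      _ ≤ isolation G q (A ∪ S ∪ T) := hT.isolation_le_union hloc (hAf.union hS.1)
      _ = isolation G q (S ∪ T) := by
        rw [Set.union_assoc, Set.union_eq_right.mpr hA.subset]

lemma IsIsolatedCore.of_union_of_not_adj (hloc : ∀ v : V, (G.neighborSet v).Finite)
    (h : IsIsolatedCore G q (X ∪ Y)) (hdisj : Disjoint X Y)
    (hXY : ∀ x ∈ X, ∀ y ∈ Y, ¬ G.Adj x y) :
    IsIsolatedCore G q X := by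
  have hX : X.Finite := h.1.subset Set.subset_union_left
  have hY : Y.Finite := h.1.subset Set.subset_union_right
  refine ⟨hX, fun A hA => ?_⟩
  have hAY : A ∪ Y ⊂ X ∪ Y := by
    obtain ⟨w, hwX, hwA⟩ := Set.exists_of_ssubset hA
    refine (Set.ssubset_iff_of_subset (Set.union_subset_union_left Y hA.subset)).mpr
      ⟨w, Or.inl hwX, fun hw => hw.elim hwA (Set.disjoint_left.mp hdisj hwX)⟩
  have := h.2 _ hAY
  rwa [isolation_union_of_not_adj hloc (hX.subset hA.subset) hY (hdisj.mono_left hA.subset)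
      (fun x hx => hXY x (hA.subset hx)), isolation_union_of_not_adj hloc hX hY hdisj hXY,
    add_lt_add_iff_right] at this

end Isolation

section Component

variable {G : SimpleGraph V} {T S : Set V} {c v w : V}

/-- The vertex set of the connected component of `c` in `G.induce T` (empty if `c ∉ T`). -/
def componentIn (G : SimpleGraph V) (T : Set V) (c : V) : Set V :=
  ⋃₀ {S | S ⊆ T ∧ c ∈ S ∧ (G.induce S).Connected}

lemma componentIn_subset : componentIn G T c ⊆ T :=
  Set.sUnion_subset fun _ hS => hS.1

lemma subset_componentIn (hST : S ⊆ T) (hc : c ∈ S) (hS : (G.induce S).Connected) :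
    S ⊆ componentIn G T c :=
  Set.subset_sUnion_of_mem ⟨hST, hc, hS⟩

lemma induce_singleton_connected (c : V) : (G.induce {c}).Connected := by
  rw [induce_singleton_eq_top]
  exact connected_top

lemma mem_componentIn_self (hc : c ∈ T) : c ∈ componentIn G T c :=
  subset_componentIn (Set.singleton_subset_iff.mpr hc) rfl (induce_singleton_connected c) rfl

lemma connected_induce_componentIn (hc : c ∈ T) : (G.induce (componentIn G T c)).Connected :=
  induce_sUnion_connected_of_pairwise_not_disjoint ⟨{c}, Set.singleton_subset_iff.mpr hc, rfl,
    induce_singleton_connected c⟩ (fun hS hS' => ⟨c, hS.2.1, hS'.2.1⟩) fun hS => hS.2.2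

lemma mem_componentIn_of_adj (hv : v ∈ componentIn G T c) (hw : w ∈ T) (hvw : G.Adj v w) :
    w ∈ componentIn G T c := by
  obtain ⟨S, ⟨hST, hcS, hS⟩, hvS⟩ := hv
  refine subset_componentIn (Set.union_subset hST (Set.insert_subset (hST hvS)
    (Set.singleton_subset_iff.mpr hw))) (Or.inl hcS)
    (induce_union_connected hS.preconnected (induce_pair_connected_of_adj hvw).preconnected
      ⟨v, hvS, Set.mem_insert v _⟩) (Or.inr (Set.mem_insert_of_mem v rfl))

lemma IsIsolatedCore.componentIn {q : ℝ} (hloc : ∀ v : V, (G.neighborSet v).Finite)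
    (hT : IsIsolatedCore G q T) : IsIsolatedCore G q (_root_.componentIn G T c) :=
  IsIsolatedCore.of_union_of_not_adj hloc (Y := T \ _root_.componentIn G T c)
    (by rwa [Set.union_sdiff_cancel componentIn_subset]) Set.disjoint_sdiff_right
    fun _ hx _ hy hxy => hy.2 (mem_componentIn_of_adj hx hy.1 hxy)

lemma exists_adj_of_connected_induce {C W : Set V} {u z : V} (hC : (G.induce C).Connected)
    (huC : u ∈ C) (huW : u ∈ W) (hzC : z ∈ C) (hzW : z ∉ W) :
    ∃ x ∈ W, ∃ y ∈ C, y ∉ W ∧ G.Adj x y := by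
  obtain ⟨p⟩ := hC.preconnected ⟨u, huC⟩ ⟨z, hzC⟩
  obtain ⟨d, -, hd₁, hd₂⟩ := p.exists_boundary_dart (Subtype.val ⁻¹' W) huW hzW
  exact ⟨d.fst, hd₁, d.snd, d.snd.2, hd₂, d.adj⟩

end Component

section Island

variable {G : SimpleGraph V} {q : ℝ} {C F : Set V} {c : V}

lemma IsIsland.exists_core (hloc : ∀ v : V, (G.neighborSet v).Finite) (hC : IsIsland G q C)
    {v : V} (hv : v ∈ C) : ∃ S, IsIsolatedCore G q S ∧ S ⊆ C ∧ v ∈ S := by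
  obtain ⟨S, hS, hvS⟩ := hC.1 hv
  refine ⟨S ∩ C, IsIsolatedCore.of_union_of_not_adj hloc (Y := S \ C) ?_ ?_ ?_,
    Set.inter_subset_right, hvS, hv⟩
  · rwa [Set.inter_union_sdiff]
  · exact Set.disjoint_sdiff_inter.symm
  · exact fun x hx y hy hxy => hy.2 (hC.2.2 x hx.2 y ⟨S, hS, hy.1⟩ hxy)

lemma IsIsland.exists_core_superset (hloc : ∀ v : V, (G.neighborSet v).Finite)
    (hC : IsIsland G q C) (hF : F.Finite) (hFC : F ⊆ C) :
    ∃ T, IsIsolatedCore G q T ∧ F ⊆ T ∧ T ⊆ C := by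
  induction F, hF using Set.Finite.induction_on with
  | empty => exact ⟨∅, isIsolatedCore_empty, le_rfl, Set.empty_subset C⟩
  | @insert v F _ _ ih =>
    obtain ⟨T, hT, hFT, hTC⟩ := ih ((Set.subset_insert v F).trans hFC)
    obtain ⟨S, hS, hSC, hvS⟩ := hC.exists_core hloc (hFC (Set.mem_insert v F))
    exact ⟨S ∪ T, hS.union hloc hT, Set.insert_subset (Or.inl hvS) (hFT.trans
      Set.subset_union_right), Set.union_subset hSC hTC⟩

lemma IsIsland.isIsolatedCore (hloc : ∀ v : V, (G.neighborSet v).Finite)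
    (hC : IsIsland G q C) (hfin : C.Finite) : IsIsolatedCore G q C := by
  obtain ⟨T, hT, hCT, hTC⟩ := hC.exists_core_superset hloc hfin le_rfl
  rwa [hTC.antisymm hCT] at hT

lemma IsIsland.exists_connected_core_ncard_lt (hloc : ∀ v : V, (G.neighborSet v).Finite)
    (hC : IsIsland G q C) (hinf : C.Infinite) {W : Set V} (hW : IsIsolatedCore G q W)
    (hWC : W ⊆ C) (hcW : c ∈ W) (hWconn : (G.induce W).Connected) :
    ∃ W', IsIsolatedCore G q W' ∧ W' ⊆ C ∧ c ∈ W' ∧ (G.induce W').Connected ∧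
      W.ncard < W'.ncard := by
  obtain ⟨z, hzC, hzW⟩ := (hinf.sdiff hW.1).nonempty
  obtain ⟨x, hxW, y, hyC, hyW, hxy⟩ :=
    exists_adj_of_connected_induce hC.2.1 (hWC hcW) hcW hzC hzW
  obtain ⟨T, hT, hWT, hTC⟩ :=
    hC.exists_core_superset hloc (hW.1.insert y) (Set.insert_subset hyC hWC)
  have hWW' : W ⊆ componentIn G T c :=
    subset_componentIn ((Set.subset_insert y W).trans hWT) hcW hWconn
  have hyW' : y ∈ componentIn G T c :=
    mem_componentIn_of_adj (hWW' hxW) (hWT (Set.mem_insert y W)) hxy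
  refine ⟨componentIn G T c, hT.componentIn hloc, componentIn_subset.trans hTC, hWW' hcW,
    connected_induce_componentIn (hWT (Set.mem_insert_of_mem y hcW)), ?_⟩
  calc W.ncard < (insert y W).ncard := by rw [Set.ncard_insert_of_notMem hyW hW.1]; omega
    _ ≤ (componentIn G T c).ncard :=
      Set.ncard_le_ncard (Set.insert_subset hyW' hWW') (hT.1.subset componentIn_subset)

lemma IsIsland.exists_connected_core_le_ncard (hloc : ∀ v : V, (G.neighborSet v).Finite)
    (hC : IsIsland G q C) (hinf : C.Infinite) (hc : c ∈ C) (k : ℕ) :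
    ∃ W, IsIsolatedCore G q W ∧ W ⊆ C ∧ c ∈ W ∧ (G.induce W).Connected ∧
      k ≤ W.ncard := by
  induction k with
  | zero =>
    obtain ⟨S, hS, hSC, hcS⟩ := hC.exists_core hloc hc
    exact ⟨componentIn G S c, hS.componentIn hloc, componentIn_subset.trans hSC,
      mem_componentIn_self hcS, connected_induce_componentIn hcS, Nat.zero_le _⟩
  | succ k ih =>
    obtain ⟨W, hW, hWC, hcW, hWconn, hkW⟩ := ih
    obtain ⟨W', hW', hW'C, hcW', hW'conn, hWW'⟩ :=
      hC.exists_connected_core_ncard_lt hloc hinf hW hWC hcW hWconn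
    exact ⟨W', hW', hW'C, hcW', hW'conn, by omega⟩

end Island

section AnchoredExpansion

variable {G : SimpleGraph V} {o : V} {q : ℝ}

lemma exists_forall_mul_ncard_le_of_lt_anchoredExpansion (hq : q < anchoredExpansion G o) :
    ∃ r, q < r ∧ 0 ≤ r ∧ ∃ n : ℕ, ∀ K : Set V, o ∈ K → K.Finite →
      (G.induce K).Connected → n ≤ K.ncard → r * K.ncard ≤ (edgeBdry G K).ncard := by
  obtain ⟨n, hn⟩ := exists_lt_of_lt_ciSup hq
  refine ⟨_, hn, Real.sInf_nonneg ?_, n, fun K hoK hK hKconn hnK => ?_⟩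
  · rintro _ ⟨K, -, -, -, -, rfl⟩
    positivity
  · have hK0 : (0 : ℝ) < K.ncard := by exact_mod_cast (Set.ncard_pos hK).mpr ⟨o, hoK⟩
    rw [← le_div_iff₀ hK0]
    refine csInf_le ⟨0, ?_⟩ ⟨K, hoK, hK, hKconn, hnK, rfl⟩
    rintro _ ⟨K, -, -, -, -, rfl⟩
    positivity

lemma exists_forall_ncard_lt_of_lt_anchoredExpansion (hloc : ∀ v : V, (G.neighborSet v).Finite)
    (hq : q < anchoredExpansion G o) {P : Set V} (hP : P.Finite) (hoP : o ∈ P)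
    (hPconn : (G.induce P).Connected) :
    ∃ N : ℕ, ∀ W : Set V, W.Finite → (G.induce W).Connected → (W ∩ P).Nonempty →
      0 < isolation G q W → W.ncard < N := by
  obtain ⟨r, hqr, hr, n, hrK⟩ := exists_forall_mul_ncard_le_of_lt_anchoredExpansion hq
  refine ⟨n + ⌈(edgeBdry G P).ncard / (r - q)⌉₊, fun W hW hWconn hWP hWpos => ?_⟩
  by_contra! hNW
  have hWK : W.ncard ≤ (W ∪ P).ncard := Set.ncard_le_ncard Set.subset_union_left (hW.union hP)
  have hWKr : (W.ncard : ℝ) ≤ (W ∪ P).ncard := by exact_mod_cast hWK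
  have hK := hrK (W ∪ P) (Or.inr hoP) (hW.union hP)
    (induce_union_connected hWconn.preconnected hPconn.preconnected hWP) (by omega)
  have hbdry : ((edgeBdry G (W ∪ P)).ncard : ℝ) ≤
      (edgeBdry G W).ncard + (edgeBdry G P).ncard := by
    exact_mod_cast (Set.ncard_le_ncard edgeBdry_union_subset
      ((edgeBdry_finite hloc hW).union (edgeBdry_finite hloc hP))).trans (Set.ncard_union_le _ _)
  have hb : ((edgeBdry G P).ncard : ℝ) ≤ (r - q) * W.ncard := by
    rw [← div_le_iff₀' (sub_pos.mpr hqr)]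
    exact (Nat.le_ceil _).trans (by exact_mod_cast (Nat.le_add_left _ n).trans hNW)
  simp only [isolation] at hWpos
  linarith [mul_le_mul_of_nonneg_left hWKr hr]

end AnchoredExpansion

lemma IsIsland.finite {G : SimpleGraph V} {q : ℝ} {C : Set V} {o : V} (hconn : G.Connected)
    (hloc : ∀ v : V, (G.neighborSet v).Finite) (hq : q < anchoredExpansion G o)
    (hC : IsIsland G q C) : C.Finite := by
  by_contra hinf
  obtain ⟨⟨c, hc⟩⟩ := hC.2.1.nonempty
  obtain ⟨p⟩ := hconn.preconnected o c
  obtain ⟨N, hN⟩ := exists_forall_ncard_lt_of_lt_anchoredExpansion hloc hq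
    p.support.finite_toSet p.start_mem_support p.connected_induce_support
  obtain ⟨W, hW, -, hcW, hWconn, hNW⟩ := hC.exists_connected_core_le_ncard hloc hinf hc N
  exact (hN W hW.1 hWconn ⟨c, hcW, p.end_mem_support⟩
    (hW.isolation_pos ⟨c, hcW⟩)).not_ge hNW

theorem stmt5_general (G : SimpleGraph V) (hconn : G.Connected)
    (hloc : ∀ v : V, (G.neighborSet v).Finite) (o : V) (q : ℝ)
    (hq : q < anchoredExpansion G o) :
    ∀ C : Set V, IsIsland G q C → C.Finite ∧ IsIsolatedCore G q C := fun _ hC =>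
  ⟨hC.finite hconn hloc hq, hC.isIsolatedCore hloc (hC.finite hconn hloc hq)⟩

/-- Let `G` be an infinite connected simple graph with finite vertex degrees, with a
distinguished root vertex `o`, and let `0 < q < i(G)`, where `i(G)` is the anchored
expansion constant of `G`. Then every `q`-island of `G` has only finitely many vertices,
and every `q`-island of `G` is itself a `q`-isolated core of `G`. -/
theorem stmt5 (G : SimpleGraph V) [Infinite V] (hconn : G.Connected)
    (hloc : ∀ v : V, (G.neighborSet v).Finite) (o : V) (q : ℝ)
    (hq0 : 0 < q) (hq : q < anchoredExpansion G o) :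
    ∀ C : Set V, IsIsland G q C → C.Finite ∧ IsIsolatedCore G q C :=
  stmt5_general G hconn hloc o q hq
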